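/- Let N ≥ 3 be a natural number and α > 0 a real number. Define the 2×2 observables A*_{10} = ((N−1)α·σz + σx)/√(1+(N−1)²α²) and A*_{i0} = σx for 2 ≤ i ≤ N, and for an outcome a ∈ Fin 2 and 2×2 observable A let Π_a(A) = (I₂ + (−1)^a A)/2 be the associated projector. Then for every outcome string (a_1,…,a_N) ∈ (Fin 2)^N, the joint outcome probability ⟨GHZ_N, (Π_{a_1}(A*_{10}) ⊗ Π_{a_2}(σx) ⊗ ⋯ ⊗ Π_{a_N}(σx)) GHZ_N⟩ equals 2^{−N}·(1 + (−1)^{a_1+⋯+a_N}/√(1+(N−1)²α²)). In particular the maximum of these probabilities over all outcome strings equals 2^{−N}·(1 + 1/√(1+(N−1)²α²)). -/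

import Mathlib

open Matrix BigOperators Finset

noncomputable section

/-- Tensor product of `N` 2×2 complex matrices, indexed by bit strings `Fin N → Fin 2`. -/
def tensorN (N : ℕ) (M : Fin N → Matrix (Fin 2) (Fin 2) ℂ) :
    Matrix (Fin N → Fin 2) (Fin N → Fin 2) ℂ :=
  Matrix.of fun f g => ∏ i, M i (f i) (g i)

def sigmax : Matrix (Fin 2) (Fin 2) ℂ := !![0, 1; 1, 0]
def sigmaz : Matrix (Fin 2) (Fin 2) ℂ := !![1, 0; 0, -1]

/-- The `N`-qubit GHZ state. -/
def ghz (N : ℕ) : (Fin N → Fin 2) → ℂ := fun f =>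
  if f = (fun _ => 0) then ((Real.sqrt 2 : ℝ) : ℂ)⁻¹
  else if f = (fun _ => 1) then ((Real.sqrt 2 : ℝ) : ℂ)⁻¹ else 0

/-- Projector `Π_a(A) = (I₂ + (−1)^a A)/2` onto the outcome `a` of the observable `A`. -/
def proj (a : Fin 2) (A : Matrix (Fin 2) (Fin 2) ℂ) : Matrix (Fin 2) (Fin 2) ℂ :=
  ((1 : ℂ) / 2) • (1 + ((-1 : ℂ) ^ (a : ℕ)) • A)

/-- The observable `A*₁₀ = ((N−1)α σz + σx)/√(1+(N−1)²α²)`. -/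
def Astar10 (N : ℕ) (α : ℝ) : Matrix (Fin 2) (Fin 2) ℂ :=
  ((Real.sqrt (1 + ((N : ℝ) - 1) ^ 2 * α ^ 2) : ℝ) : ℂ)⁻¹ •
    (((((N : ℝ) - 1) * α : ℝ) : ℂ) • sigmaz + sigmax)

/-! The GHZ state lives on the two constant strings `0` and `1`, so `⟨GHZ, M GHZ⟩` is half the
sum of the four entries of `M` indexed by them, and for a tensor product these entries are
products of one-qubit entries. A `σx`-projector has diagonal entries `1/2` and off-diagonal
entries `±1/2` with the sign of its outcome; hence the diagonal terms give `2^{1-N}` times the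
trace of the first projector, which is `1` because the first observable is traceless, and the
off-diagonal terms give `(-1)^{Σ aᵢ}` times its off-diagonal entry `1/√(1+(N−1)²α²)`. -/

lemma Finset.prod_ite_eq_mul_prod_erase {ι M : Type*} [Fintype ι] [DecidableEq ι] [CommMonoid M]
    (i₀ : ι) (f g : ι → M) :
    ∏ i, (if i = i₀ then f i else g i) = f i₀ * ∏ i ∈ univ.erase i₀, g i := by
  rw [← mul_prod_erase univ _ (mem_univ i₀), if_pos rfl]
  congr 1
  exact prod_congr rfl fun i hi => if_neg (ne_of_mem_erase hi)

lemma star_ghz (N : ℕ) : star (ghz N) = ghz N := by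
  funext f
  simp only [Pi.star_apply, ghz]
  split_ifs <;> simp

lemma sum_ghz_mul {N : ℕ} (hN : 0 < N) (w : (Fin N → Fin 2) → ℂ) :
    ∑ f, ghz N f * w f = ((Real.sqrt 2 : ℝ) : ℂ)⁻¹ * (w 0 + w 1) := by
  have h01 : (0 : Fin N → Fin 2) ≠ 1 := fun h => by simpa using congrFun h ⟨0, hN⟩
  rw [← sum_subset (subset_univ {0, 1}), sum_pair h01]
  · simp [ghz, ← Pi.zero_def, ← Pi.one_def, h01.symm, mul_add]
  · intro f _ hf
    simp only [mem_insert, mem_singleton, not_or] at hf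
    simp [ghz, ← Pi.zero_def, ← Pi.one_def, hf.1, hf.2]

lemma ghz_dotProduct_mulVec_ghz {N : ℕ} (hN : 0 < N)
    (M : Matrix (Fin N → Fin 2) (Fin N → Fin 2) ℂ) :
    star (ghz N) ⬝ᵥ M *ᵥ ghz N = (M 0 0 + M 0 1 + M 1 0 + M 1 1) / 2 := by
  have hsqrt : ((Real.sqrt 2 : ℝ) : ℂ)⁻¹ * ((Real.sqrt 2 : ℝ) : ℂ)⁻¹ = 1 / 2 := by
    rw [← mul_inv, ← Complex.ofReal_mul, Real.mul_self_sqrt zero_le_two]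
    norm_num
  have hmulVec (f) : (M *ᵥ ghz N) f = ((Real.sqrt 2 : ℝ) : ℂ)⁻¹ * (M f 0 + M f 1) := by
    simp_rw [mulVec, dotProduct, mul_comm (M f _)]
    exact sum_ghz_mul hN _
  rw [star_ghz, dotProduct, sum_ghz_mul hN, hmulVec, hmulVec]
  linear_combination (M 0 0 + M 0 1 + M 1 0 + M 1 1) * hsqrt

lemma ghz_dotProduct_tensorN_mulVec_ghz {N : ℕ} (hN : 0 < N)
    (M : Fin N → Matrix (Fin 2) (Fin 2) ℂ) :
    star (ghz N) ⬝ᵥ tensorN N M *ᵥ ghz N =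
      (∏ i, M i 0 0 + ∏ i, M i 0 1 + ∏ i, M i 1 0 + ∏ i, M i 1 1) / 2 := by
  simp [ghz_dotProduct_mulVec_ghz hN, tensorN]

lemma proj_apply (a : Fin 2) (A : Matrix (Fin 2) (Fin 2) ℂ) (x y : Fin 2) :
    proj a A x y = ((1 : Matrix (Fin 2) (Fin 2) ℂ) x y + (-1) ^ (a : ℕ) * A x y) / 2 := by
  simp only [proj, one_div, Matrix.smul_apply, Matrix.add_apply, smul_eq_mul]
  ring

lemma proj_apply_zero_zero_add_one_one (a : Fin 2) {A : Matrix (Fin 2) (Fin 2) ℂ}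
    (hA : A.trace = 0) : proj a A 0 0 + proj a A 1 1 = 1 := by
  rw [trace_fin_two] at hA
  simp only [proj_apply, one_apply_eq]
  linear_combination (-1 : ℂ) ^ (a : ℕ) / 2 * hA

lemma proj_apply_zero_one_add_one_zero (a : Fin 2) (A : Matrix (Fin 2) (Fin 2) ℂ) :
    proj a A 0 1 + proj a A 1 0 = (-1) ^ (a : ℕ) * (A 0 1 + A 1 0) / 2 := by
  simp only [proj_apply, one_apply_ne zero_ne_one, one_apply_ne one_ne_zero]
  ring

lemma proj_sigmax_apply_self (a x : Fin 2) : proj a sigmax x x = 1 / 2 := by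
  fin_cases x <;> simp [proj_apply, sigmax]

lemma proj_sigmax_apply_of_ne (a : Fin 2) {x y : Fin 2} (h : x ≠ y) :
    proj a sigmax x y = (-1) ^ (a : ℕ) / 2 := by
  fin_cases x <;> fin_cases y <;> simp_all [proj_apply, sigmax]

theorem ghz_dotProduct_tensorN_proj_mulVec_ghz {N : ℕ} (i₀ : Fin N)
    {B : Matrix (Fin 2) (Fin 2) ℂ} (hB : B.trace = 0) (a : Fin N → Fin 2) :
    star (ghz N) ⬝ᵥ
        tensorN N (fun i => if i = i₀ then proj (a i) B else proj (a i) sigmax) *ᵥ ghz N =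
      (2 ^ N)⁻¹ * (1 + (-1) ^ (∑ i, (a i : ℕ)) * (B 0 1 + B 1 0) / 2) := by
  have hcard : #(univ.erase i₀) = N - 1 := by simp
  have hdiag (x : Fin 2) :
      ∏ i ∈ univ.erase i₀, proj (a i) sigmax x x = (1 / 2) ^ (N - 1) := by
    simp [proj_sigmax_apply_self, hcard]
  have hoff {x y : Fin 2} (h : x ≠ y) :
      ∏ i ∈ univ.erase i₀, proj (a i) sigmax x y =
        (∏ i ∈ univ.erase i₀, (-1 : ℂ) ^ (a i : ℕ)) * (1 / 2) ^ (N - 1) := by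
    simp [proj_sigmax_apply_of_ne _ h, div_eq_mul_inv, prod_mul_distrib, hcard]
  have hsign : (-1 : ℂ) ^ (a i₀ : ℕ) * ∏ i ∈ univ.erase i₀, (-1 : ℂ) ^ (a i : ℕ) =
      (-1) ^ (∑ i, (a i : ℕ)) := by
    rw [mul_prod_erase univ (fun i => (-1 : ℂ) ^ (a i : ℕ)) (mem_univ i₀), prod_pow_eq_pow_sum]
  have hdiag₀ := proj_apply_zero_zero_add_one_one (a i₀) hB
  have hoff₀ := proj_apply_zero_one_add_one_zero (a i₀) B
  have hpow : (2 ^ N : ℂ)⁻¹ = (1 / 2) ^ (N - 1) * (1 / 2) := by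
    rw [← pow_succ, Nat.sub_add_cancel i₀.pos, one_div, inv_pow]
  have hsplit (x y : Fin 2) :
      ∏ i, (if i = i₀ then proj (a i) B else proj (a i) sigmax) x y =
        proj (a i₀) B x y * ∏ i ∈ univ.erase i₀, proj (a i) sigmax x y := by
    rw [← prod_ite_eq_mul_prod_erase i₀ (fun i => proj (a i) B x y)]
    exact prod_congr rfl fun i _ => apply_ite (fun M : Matrix (Fin 2) (Fin 2) ℂ => M x y) ..
  simp only [ghz_dotProduct_tensorN_mulVec_ghz i₀.pos, hsplit, hdiag, hoff zero_ne_one,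
    hoff one_ne_zero]
  rw [← hsign, hpow]
  linear_combination (1 / 2 : ℂ) ^ (N - 1) / 2 * hdiag₀ +
    (1 / 2 : ℂ) ^ (N - 1) / 2 * (∏ i ∈ univ.erase i₀, (-1 : ℂ) ^ (a i : ℕ)) * hoff₀

lemma trace_Astar10 (N : ℕ) (α : ℝ) : (Astar10 N α).trace = 0 := by
  simp [Astar10, sigmax, sigmaz, trace_fin_two]

lemma Astar10_apply_zero_one_add_one_zero (N : ℕ) (α : ℝ) :
    Astar10 N α 0 1 + Astar10 N α 1 0 =
      2 * ((Real.sqrt (1 + ((N : ℝ) - 1) ^ 2 * α ^ 2) : ℝ) : ℂ)⁻¹ := by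
  simp [Astar10, sigmax, sigmaz, two_mul]

lemma ghz_dotProduct_tensorN_proj_Astar10_mulVec_ghz {N : ℕ} (i₀ : Fin N) (α : ℝ)
    (a : Fin N → Fin 2) :
    star (ghz N) ⬝ᵥ
        tensorN N (fun i => if i = i₀ then proj (a i) (Astar10 N α) else proj (a i) sigmax) *ᵥ
          ghz N =
      ((((2 : ℝ) ^ N)⁻¹ * (1 + (-1 : ℝ) ^ (∑ i, (a i : ℕ)) /
        Real.sqrt (1 + ((N : ℝ) - 1) ^ 2 * α ^ 2)) : ℝ) : ℂ) := by
  rw [ghz_dotProduct_tensorN_proj_mulVec_ghz i₀ (trace_Astar10 N α),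
    Astar10_apply_zero_one_add_one_zero]
  push_cast
  ring

/-- The joint-outcome (guessing) probabilities for measuring `A*₁₀, σx, …, σx` on the
GHZ state: each outcome string `a` has probability
`2^{−N}(1 + (−1)^{Σ aᵢ}/√(1+(N−1)²α²))`, and the maximal probability is
`2^{−N}(1 + 1/√(1+(N−1)²α²))`. -/
theorem ghz_outcome_probabilities (N : ℕ) (hN : 3 ≤ N) (α : ℝ) :
    (∀ a : Fin N → Fin 2,
      star (ghz N) ⬝ᵥ
        (tensorN N (fun i => if i = (⟨0, by omega⟩ : Fin N)
            then proj (a i) (Astar10 N α) else proj (a i) sigmax)).mulVec (ghz N)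
      = ((((2 : ℝ) ^ N)⁻¹ * (1 + (-1 : ℝ) ^ (∑ i, ((a i : ℕ)))
            / Real.sqrt (1 + ((N : ℝ) - 1) ^ 2 * α ^ 2)) : ℝ) : ℂ))
    ∧ IsGreatest
        { x : ℝ | ∃ a : Fin N → Fin 2, (x : ℂ) =
            star (ghz N) ⬝ᵥ
              (tensorN N (fun i => if i = (⟨0, by omega⟩ : Fin N)
                  then proj (a i) (Astar10 N α) else proj (a i) sigmax)).mulVec (ghz N) }
        (((2 : ℝ) ^ N)⁻¹ * (1 + 1 / Real.sqrt (1 + ((N : ℝ) - 1) ^ 2 * α ^ 2))) := by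
  have hprob := ghz_dotProduct_tensorN_proj_Astar10_mulVec_ghz (⟨0, by omega⟩ : Fin N) α
  refine ⟨hprob, ⟨0, by simp [hprob]⟩, ?_⟩
  rintro x ⟨a, hx⟩
  rw [hprob, Complex.ofReal_inj] at hx
  rw [hx]
  have hsign : (-1 : ℝ) ^ (∑ i, (a i : ℕ)) ≤ 1 := by
    rcases neg_one_pow_eq_or ℝ (∑ i, (a i : ℕ)) with h | h <;> norm_num [h]
  gcongr
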